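/- For every r ≥ 1/2 and every dimension d ≥ 1, there exists a constant C = C(r,d) > 0 such that for all measurable u : 𝕋^d → ℝ with u^r := |u|^{r−1}u ∈ H^1(𝕋^d), one has ∫_{𝕋^d} |u(x)|^{2r} dx ≤ C [ (∫_{𝕋^d} |u(x)| dx)^{2r} + ∫_{𝕋^d} |∇(u(x)^r)|^2 dx ]. -/

import Mathlib

/-!
Write `v = |u|^(r-1) u`. On the unit cube, the staircase path from `x` to `w` that changes one
coordinate at a time gives `|v x| ≤ |v w| + ∑ₖ ∫₀¹ |∂ₖ v|` along its `k`-th segment. Averaging over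
`w` and squaring, and using that the running point `splice k (x, w, τ)` of the `k`-th segment is
again uniformly distributed on the cube when `x`, `w`, `τ` are, gives the Poincaré-type bound
`∫ v² ≤ (d + 1) ((∫ |v|)² + ∫ ‖∇v‖²)`, that is `∫ |u|^(2r) ≤ (d + 1) ((∫ |u|^r)² + ∫ ‖∇v‖²)`.
Hölder's inequality (Jensen for `r ≤ 1`, interpolation between `L¹` and `L^(2r)` for `r > 1`)
bounds `(∫ |u|^r)²` by `((∫ |u|)^(2r))^θ (∫ |u|^(2r))^(1-θ)` with `0 < θ ≤ 1`, and Young's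
inequality absorbs the factor `(∫ |u|^(2r))^(1-θ)` into the left-hand side.
-/

open MeasureTheory Set Function
open scoped ENNReal

noncomputable section

namespace PoincareTorus

section Splice

variable {α : Type*} {d : ℕ}

def interpolate (n : ℕ) (x w : Fin d → α) : Fin d → α :=
  fun i => if (i : ℕ) < n then w i else x i

def splice (k : Fin d) (z : (Fin d → α) × (Fin d → α) × α) : Fin d → α :=
  update (interpolate k z.1 z.2.1) k z.2.2

lemma splice_apply (k i : Fin d) (z : (Fin d → α) × (Fin d → α) × α) :
    splice k z i = if i < k then z.2.1 i else if i = k then z.2.2 else z.1 i := by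
  rcases lt_trichotomy i k with h | rfl | h
  · simp [splice, interpolate, h, h.ne, Fin.lt_def.mp h]
  · simp [splice]
  · simp [splice, interpolate, h.ne', asymm h, not_lt.mpr (Fin.le_def.mp h.le)]

lemma interpolate_zero (x w : Fin d → α) : interpolate 0 x w = x := by
  ext i; simp [interpolate]

lemma interpolate_self (x w : Fin d → α) : interpolate d x w = w := by
  ext i; simp [interpolate]

lemma splice_eq_interpolate (k : Fin d) (x w : Fin d → α) :
    splice k (x, w, x k) = interpolate k x w := by
  ext i; rcases eq_or_ne i k with rfl | h <;> simp [splice, interpolate, *]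

lemma splice_eq_interpolate_succ (k : Fin d) (x w : Fin d → α) :
    splice k (x, w, w k) = interpolate (k + 1) x w := by
  ext i
  rcases eq_or_ne i k with rfl | h
  · simp [splice, interpolate]
  · simp [splice, interpolate, h, h.le_iff_lt]

lemma splice_preimage_pi (k : Fin d) (s : Fin d → Set α) :
    splice k ⁻¹' univ.pi s =
      (univ.pi fun i => if k < i then s i else univ) ×ˢ
        ((univ.pi fun i => if i < k then s i else univ) ×ˢ s k) := by
  ext ⟨x, w, τ⟩
  simp only [mem_preimage, mem_pi, mem_univ, true_implies, mem_prod, splice_apply]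
  constructor
  · intro h
    refine ⟨fun i => ?_, fun i => ?_, by simpa using h k⟩
    · split_ifs with hki
      · simpa [asymm hki, hki.ne'] using h i
      · trivial
    · split_ifs with hik
      · simpa [hik] using h i
      · trivial
  · rintro ⟨hx, hw, hτ⟩ i
    rcases lt_trichotomy i k with h | rfl | h
    · simpa [h] using hw i
    · simpa using hτ
    · simpa [h, asymm h, h.ne'] using hx i

variable [MeasurableSpace α]

lemma measurable_splice (k : Fin d) : Measurable (splice (α := α) k) := by
  refine measurable_pi_lambda _ fun i => ?_
  simp only [splice_apply]
  split_ifs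
  · exact (measurable_pi_apply i).comp (measurable_fst.comp measurable_snd)
  · exact measurable_snd.comp measurable_snd
  · exact (measurable_pi_apply i).comp measurable_fst

lemma measurePreserving_splice (μ : Measure α) [IsProbabilityMeasure μ] (k : Fin d) :
    MeasurePreserving (splice k)
      ((Measure.pi fun _ => μ).prod ((Measure.pi fun _ => μ).prod μ)) (Measure.pi fun _ => μ) := by
  refine ⟨measurable_splice k, (Measure.pi_eq fun s hs => ?_).symm⟩
  have hfactor (i : Fin d) : μ (s i) = (if k < i then μ (s i) else 1) *
      ((if i < k then μ (s i) else 1) * if i = k then μ (s i) else 1) := by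
    rcases lt_trichotomy i k with h | rfl | h
    · simp [h, asymm h, h.ne]
    · simp
    · simp [h, asymm h, h.ne']
  rw [Measure.map_apply (measurable_splice k) (.univ_pi hs), splice_preimage_pi,
    Measure.prod_prod, Measure.prod_prod, Measure.pi_pi, Measure.pi_pi,
    Finset.prod_congr rfl fun i _ => hfactor i, Finset.prod_mul_distrib, Finset.prod_mul_distrib,
    Finset.prod_ite_eq']
  simp only [apply_ite μ, measure_univ, Finset.mem_univ, if_true]

end Splice

section Lintegral

variable {α : Type*} [MeasurableSpace α]

lemma sq_lintegral_le_lintegral_sq {μ : Measure α} [IsProbabilityMeasure μ] {f : α → ℝ≥0∞}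
    (hf : AEMeasurable f μ) : (∫⁻ a, f a ∂μ) ^ 2 ≤ ∫⁻ a, f a ^ 2 ∂μ := by
  have h := ENNReal.lintegral_mul_norm_pow_le (hf.pow_const 2) (aemeasurable_const (b := 1))
    (p := 1 / 2) (q := 1 / 2) (by norm_num) (by norm_num) (by norm_num)
  have hsqrt (c : ℝ≥0∞) : (c ^ 2) ^ (1 / 2 : ℝ) = c := by
    rw [← ENNReal.rpow_natCast, ← ENNReal.rpow_mul]; norm_num
  simp only [hsqrt, ENNReal.one_rpow, mul_one, lintegral_const, measure_univ] at h
  calc (∫⁻ a, f a ∂μ) ^ 2 ≤ ((∫⁻ a, f a ^ 2 ∂μ) ^ (1 / 2 : ℝ)) ^ 2 := by gcongr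
    _ = ∫⁻ a, f a ^ 2 ∂μ := by rw [← ENNReal.rpow_natCast, ← ENNReal.rpow_mul]; norm_num

lemma lintegral_sq_lintegral_splice_le {d : ℕ} (μ : Measure α) [IsProbabilityMeasure μ]
    {F : (Fin d → α) → ℝ≥0∞} (hF : Measurable F) (k : Fin d) :
    ∫⁻ x, (∫⁻ p, F (splice k (x, p)) ∂((Measure.pi fun _ => μ).prod μ)) ^ 2
        ∂(Measure.pi fun _ => μ) ≤ ∫⁻ y, F y ^ 2 ∂(Measure.pi fun _ => μ) :=
  calc _ ≤ ∫⁻ x, ∫⁻ p, F (splice k (x, p)) ^ 2 ∂((Measure.pi fun _ => μ).prod μ)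
          ∂(Measure.pi fun _ => μ) :=
        lintegral_mono fun _ => sq_lintegral_le_lintegral_sq
          (hF.comp ((measurable_splice k).comp measurable_prodMk_left)).aemeasurable
    _ = ∫⁻ z, F (splice k z) ^ 2
          ∂((Measure.pi fun _ => μ).prod ((Measure.pi fun _ => μ).prod μ)) :=
        (lintegral_prod _ ((hF.comp (measurable_splice k)).pow_const 2).aemeasurable).symm
    _ = _ := (measurePreserving_splice μ k).lintegral_comp (hF.pow_const 2)

end Lintegral

lemma sq_add_sum_le_card_add_one_mul {ι : Type*} [Fintype ι] (a : ℝ≥0∞) (f : ι → ℝ≥0∞) :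
    (a + ∑ i, f i) ^ 2 ≤ (Fintype.card ι + 1) * (a ^ 2 + ∑ i, f i ^ 2) := by
  have h := ENNReal.rpow_sum_le_const_mul_sum_rpow (s := Finset.univ)
    (f := fun o : Option ι => o.elim a f) one_le_two
  simp only [Fintype.sum_option, Option.elim_none, Option.elim_some, Finset.card_univ,
    Fintype.card_option] at h
  norm_num at h
  exact_mod_cast h

abbrev cube (d : ℕ) : Set (Fin d → ℝ) := univ.pi fun _ => Icc 0 1

lemma measurableSet_cube (d : ℕ) : MeasurableSet (cube d) :=
  .univ_pi fun _ => measurableSet_Icc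

lemma isCompact_cube (d : ℕ) : IsCompact (cube d) :=
  isCompact_univ_pi fun _ => isCompact_Icc

instance : IsProbabilityMeasure (volume.restrict (Icc (0 : ℝ) 1)) :=
  ⟨by simp⟩

lemma volume_restrict_cube (d : ℕ) :
    volume.restrict (cube d) = Measure.pi fun _ => volume.restrict (Icc (0 : ℝ) 1) := by
  rw [volume_pi, Measure.restrict_pi_pi]

instance (d : ℕ) : IsProbabilityMeasure (volume.restrict (cube d)) := by
  rw [volume_restrict_cube]; infer_instance

lemma enorm_sub_le_lintegral_Icc_of_hasDerivAt {f f' : ℝ → ℝ} {a b x y : ℝ}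
    (hf : ∀ t, HasDerivAt f (f' t) t) (hx : x ∈ Icc a b) (hy : y ∈ Icc a b) :
    ‖f y - f x‖ₑ ≤ ∫⁻ t in Icc a b, ‖f' t‖ₑ := by
  by_cases hfin : ∫⁻ t in Icc a b, ‖f' t‖ₑ = ∞
  · simp [hfin]
  have hmeas : Measurable f' := by
    rw [show f' = deriv f from funext fun t => (hf t).deriv.symm]
    exact measurable_deriv f
  have hsub : uIoc x y ⊆ Icc a b := uIoc_subset_uIcc.trans (uIcc_subset_Icc hx hy)
  have hint : IntegrableOn f' (uIoc x y) :=
    IntegrableOn.mono_set ⟨hmeas.aestronglyMeasurable, lt_top_iff_ne_top.2 hfin⟩ hsub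
  rw [← intervalIntegral.integral_eq_sub_of_hasDerivAt (fun t _ => hf t)
    (intervalIntegrable_iff.2 hint), ← ofReal_norm,
    intervalIntegral.norm_integral_eq_norm_integral_uIoc, ofReal_norm]
  exact (enorm_integral_le_lintegral_enorm _).trans (lintegral_mono_set hsub)

section PartialDerivatives

variable {d : ℕ} {V : (Fin d → ℝ) → ℝ} {g : Fin d → (Fin d → ℝ) → ℝ}

lemma enorm_le_add_sum_lintegral_splice
    (hV : ∀ y k, HasDerivAt (fun τ => V (update y k τ)) (g k y) (y k))
    {x w : Fin d → ℝ} (hx : x ∈ cube d) (hw : w ∈ cube d) :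
    ‖V x‖ₑ ≤ ‖V w‖ₑ + ∑ k, ∫⁻ τ in Icc 0 1, ‖g k (splice k (x, w, τ))‖ₑ := by
  have hstep (k : Fin d) : ‖V (interpolate k x w) - V (interpolate (k + 1) x w)‖ₑ ≤
      ∫⁻ τ in Icc 0 1, ‖g k (splice k (x, w, τ))‖ₑ := by
    rw [← splice_eq_interpolate, ← splice_eq_interpolate_succ, enorm_sub_rev]
    refine enorm_sub_le_lintegral_Icc_of_hasDerivAt (f := fun τ => V (splice k (x, w, τ)))
      (fun τ => ?_) (hx k trivial) (hw k trivial)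
    simpa [splice] using hV (splice k (x, w, τ)) k
  calc ‖V x‖ₑ ≤ ‖V w‖ₑ + ‖V x - V w‖ₑ := by simpa using enorm_add_le (V w) (V x - V w)
    _ = ‖V w‖ₑ + ‖∑ n ∈ Finset.range d,
          (V (interpolate n x w) - V (interpolate (n + 1) x w))‖ₑ := by
        rw [Finset.sum_range_sub', interpolate_zero, interpolate_self]
    _ ≤ ‖V w‖ₑ + ∑ n ∈ Finset.range d,
          ‖V (interpolate n x w) - V (interpolate (n + 1) x w)‖ₑ := by
        gcongr; exact enorm_sum_le _ _
    _ ≤ ‖V w‖ₑ + ∑ k, ∫⁻ τ in Icc 0 1, ‖g k (splice k (x, w, τ))‖ₑ := by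
        rw [← Fin.sum_univ_eq_sum_range]; gcongr with k; exact hstep k

lemma enorm_le_lintegral_add_sum_lintegral_splice (hVm : Measurable V)
    (hg : ∀ k, Measurable (g k))
    (hV : ∀ y k, HasDerivAt (fun τ => V (update y k τ)) (g k y) (y k))
    {x : Fin d → ℝ} (hx : x ∈ cube d) :
    ‖V x‖ₑ ≤ (∫⁻ w in cube d, ‖V w‖ₑ) + ∑ k, ∫⁻ p, ‖g k (splice k (x, p))‖ₑ
      ∂((volume.restrict (cube d)).prod (volume.restrict (Icc 0 1))) := by
  have hgm (k : Fin d) : Measurable fun p => ‖g k (splice k (x, p))‖ₑ :=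
    (hg k).enorm.comp ((measurable_splice k).comp measurable_prodMk_left)
  calc ‖V x‖ₑ = ∫⁻ _ in cube d, ‖V x‖ₑ := by rw [lintegral_const, measure_univ, mul_one]
    _ ≤ ∫⁻ w in cube d, (‖V w‖ₑ + ∑ k, ∫⁻ τ in Icc 0 1, ‖g k (splice k (x, w, τ))‖ₑ) :=
        setLIntegral_mono' (measurableSet_cube d) fun w hw =>
          enorm_le_add_sum_lintegral_splice hV hx hw
    _ = _ := by
        rw [lintegral_add_left hVm.enorm,
          lintegral_finsetSum _ fun k _ => (hgm k).lintegral_prod_right']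
        exact congrArg _ (Finset.sum_congr rfl fun k _ =>
          (lintegral_prod (μ := volume.restrict (cube d)) _ (hgm k).aemeasurable).symm)

theorem lintegral_enorm_sq_le_of_hasDerivAt_update (hVm : Measurable V)
    (hg : ∀ k, Measurable (g k))
    (hV : ∀ y k, HasDerivAt (fun τ => V (update y k τ)) (g k y) (y k)) :
    ∫⁻ x in cube d, ‖V x‖ₑ ^ 2 ≤
      (d + 1) * ((∫⁻ x in cube d, ‖V x‖ₑ) ^ 2 + ∑ k, ∫⁻ x in cube d, ‖g k x‖ₑ ^ 2) := by
  set A := ∫⁻ x in cube d, ‖V x‖ₑ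
  set G : Fin d → (Fin d → ℝ) → ℝ≥0∞ := fun k x => ∫⁻ p, ‖g k (splice k (x, p))‖ₑ
    ∂((volume.restrict (cube d)).prod (volume.restrict (Icc 0 1)))
  have hGm (k : Fin d) : Measurable (G k) :=
    ((hg k).enorm.comp (measurable_splice k)).lintegral_prod_right'
  have hG (k : Fin d) : ∫⁻ x in cube d, G k x ^ 2 ≤ ∫⁻ x in cube d, ‖g k x‖ₑ ^ 2 := by
    simp only [G, volume_restrict_cube]
    exact lintegral_sq_lintegral_splice_le _ (hg k).enorm k
  calc ∫⁻ x in cube d, ‖V x‖ₑ ^ 2 ≤ ∫⁻ x in cube d, (A + ∑ k, G k x) ^ 2 :=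
        setLIntegral_mono' (measurableSet_cube d) fun x hx => by
          gcongr; exact enorm_le_lintegral_add_sum_lintegral_splice hVm hg hV hx
    _ ≤ ∫⁻ x in cube d, (d + 1) * (A ^ 2 + ∑ k, G k x ^ 2) :=
        lintegral_mono fun x => by simpa using sq_add_sum_le_card_add_one_mul A fun k => G k x
    _ = (d + 1) * (A ^ 2 + ∑ k, ∫⁻ x in cube d, G k x ^ 2) := by
        rw [lintegral_const_mul' _ _ (by simp), lintegral_add_left measurable_const,
          lintegral_finsetSum _ fun k _ => (hGm k).pow_const 2, lintegral_const, measure_univ,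
          mul_one]
    _ ≤ _ := mul_le_mul_right (add_le_add_right (Finset.sum_le_sum fun k _ => hG k) _) _

end PartialDerivatives

lemma sum_sq_apply_single_eq_norm_sq {ι : Type*} [Fintype ι] [DecidableEq ι]
    (L : EuclideanSpace ℝ ι →L[ℝ] ℝ) : ∑ i, L (EuclideanSpace.single i 1) ^ 2 = ‖L‖ ^ 2 := by
  set y := (InnerProductSpace.toDual ℝ _).symm L
  have hy (i : ι) : L (EuclideanSpace.single i 1) = y i := by
    rw [← InnerProductSpace.toDual_symm_apply, EuclideanSpace.inner_single_right]; simp [y]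
  rw [← (InnerProductSpace.toDual ℝ _).symm.norm_map L, EuclideanSpace.norm_sq_eq]
  simp [hy, y]

section Euclidean

variable {d : ℕ} {v : EuclideanSpace ℝ (Fin d) → ℝ}

lemma hasDerivAt_comp_toLp_update (hv : Differentiable ℝ v) (y : Fin d → ℝ) (k : Fin d) :
    HasDerivAt (fun τ => v (WithLp.toLp 2 (update y k τ)))
      (fderiv ℝ v (WithLp.toLp 2 y) (EuclideanSpace.single k 1)) (y k) := by
  have hpath : HasDerivAt (fun τ => WithLp.toLp 2 (update y k τ))
      (EuclideanSpace.single k (1 : ℝ)) (y k) :=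
    (PiLp.continuousLinearEquiv 2 ℝ fun _ : Fin d => ℝ).symm.hasFDerivAt.comp_hasDerivAt _
      (hasDerivAt_update y k (y k))
  have hv' : HasFDerivAt v (fderiv ℝ v (WithLp.toLp 2 y))
      (WithLp.toLp 2 (update y k (y k))) := by
    rw [update_eq_self]; exact (hv _).hasFDerivAt
  exact hv'.comp_hasDerivAt _ hpath

lemma lintegral_ofReal_sq_le_of_differentiable (hv : Differentiable ℝ v) :
    ∫⁻ x in cube d, ENNReal.ofReal (v (WithLp.toLp 2 x) ^ 2) ≤
      (d + 1) * ((∫⁻ x in cube d, ENNReal.ofReal |v (WithLp.toLp 2 x)|) ^ 2 +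
        ∫⁻ x in cube d, ENNReal.ofReal (‖fderiv ℝ v (WithLp.toLp 2 x)‖ ^ 2)) := by
  set g : Fin d → (Fin d → ℝ) → ℝ :=
    fun k x => fderiv ℝ v (WithLp.toLp 2 x) (EuclideanSpace.single k 1)
  have hgm (k : Fin d) : Measurable (g k) :=
    (measurable_fderiv_apply_const ℝ v _).comp (WithLp.measurable_toLp 2 _)
  have hsq (a : ℝ) : ‖a‖ₑ ^ 2 = ENNReal.ofReal (a ^ 2) := by
    rw [Real.enorm_eq_ofReal_abs, ← ENNReal.ofReal_pow (abs_nonneg a), sq_abs]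
  have hgrad (x : Fin d → ℝ) :
      ∑ k, ‖g k x‖ₑ ^ 2 = ENNReal.ofReal (‖fderiv ℝ v (WithLp.toLp 2 x)‖ ^ 2) := by
    simp only [hsq, g]
    rw [← ENNReal.ofReal_sum_of_nonneg fun k _ => sq_nonneg _, sum_sq_apply_single_eq_norm_sq]
  have h := lintegral_enorm_sq_le_of_hasDerivAt_update (V := fun x => v (WithLp.toLp 2 x))
    (hv.continuous.comp (PiLp.continuous_toLp 2 _)).measurable hgm
    (hasDerivAt_comp_toLp_update hv)
  rw [← lintegral_finsetSum _ fun k _ => (hgm k).enorm.pow_const 2] at h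
  simp only [hgrad] at h
  simp only [hsq] at h
  simpa only [Real.enorm_eq_ofReal_abs] using h

theorem integral_sq_le_of_differentiable (hv : Differentiable ℝ v)
    (hDv : IntegrableOn (fun x => ‖fderiv ℝ v x‖ ^ 2) (WithLp.ofLp ⁻¹' cube d)) :
    ∫ x in cube d, v (WithLp.toLp 2 x) ^ 2 ≤
      (d + 1) * ((∫ x in cube d, |v (WithLp.toLp 2 x)|) ^ 2 +
        ∫ x in cube d, ‖fderiv ℝ v (WithLp.toLp 2 x)‖ ^ 2) := by
  have hV : Continuous fun x => v (WithLp.toLp 2 x) :=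
    hv.continuous.comp (PiLp.continuous_toLp 2 _)
  have hDV : IntegrableOn (fun x => ‖fderiv ℝ v (WithLp.toLp 2 x)‖ ^ 2) (cube d) :=
    ((PiLp.volume_preserving_toLp (Fin d)).integrableOn_comp_preimage
      (MeasurableEquiv.toLp 2 _).measurableEmbedding).2 hDv
  have h := lintegral_ofReal_sq_le_of_differentiable hv
  rw [← ofReal_integral_eq_lintegral_ofReal
      ((show Continuous fun x => v (WithLp.toLp 2 x) ^ 2 from hV.pow 2).continuousOn
        |>.integrableOn_compact (isCompact_cube d))
      (.of_forall fun _ => sq_nonneg _),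
    ← ofReal_integral_eq_lintegral_ofReal
      (hV.abs.continuousOn.integrableOn_compact (isCompact_cube d))
      (.of_forall fun _ => abs_nonneg _),
    ← ofReal_integral_eq_lintegral_ofReal hDV (.of_forall fun _ => sq_nonneg _),
    ← ENNReal.ofReal_pow (integral_nonneg fun _ => abs_nonneg _),
    ← ENNReal.ofReal_add (by positivity) (integral_nonneg fun _ => sq_nonneg _),
    show ((d : ℝ≥0∞) + 1) = ENNReal.ofReal (d + 1) by norm_cast,
    ← ENNReal.ofReal_mul (by positivity)] at h
  exact (ENNReal.ofReal_le_ofReal_iff (by positivity)).1 h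

end Euclidean

lemma integral_rpow_interp_le {α : Type*} [MeasurableSpace α] {μ : Measure α} {f : α → ℝ}
    (hf : 0 ≤ f) {s p : ℝ} (hs : 0 < s) (hs1 : s ≤ 1) (hp : 0 ≤ p) (hf1 : Integrable f μ)
    (hfp : Integrable (fun x => f x ^ p) μ)
    (hfq : Integrable (fun x => f x ^ (s + (1 - s) * p)) μ) :
    ∫ x, f x ^ (s + (1 - s) * p) ∂μ ≤ (∫ x, f x ∂μ) ^ s * (∫ x, f x ^ p ∂μ) ^ (1 - s) := by
  have hs1' : 0 ≤ 1 - s := sub_nonneg.2 hs1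
  have h := ENNReal.lintegral_mul_norm_pow_le hf1.aemeasurable.ennreal_ofReal
    hfp.aemeasurable.ennreal_ofReal hs.le hs1' (add_sub_cancel s 1)
  have hpt (x : α) : ENNReal.ofReal (f x) ^ s * ENNReal.ofReal (f x ^ p) ^ (1 - s) =
      ENNReal.ofReal (f x ^ (s + (1 - s) * p)) := by
    rw [ENNReal.ofReal_rpow_of_nonneg (hf x) hs.le,
      ENNReal.ofReal_rpow_of_nonneg (Real.rpow_nonneg (hf x) _) hs1',
      ← ENNReal.ofReal_mul (Real.rpow_nonneg (hf x) _), ← Real.rpow_mul (hf x),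
      Real.rpow_add' (hf x) (by positivity), mul_comm p]
  have hI1 : 0 ≤ ∫ x, f x ∂μ := integral_nonneg hf
  have hIp : 0 ≤ ∫ x, f x ^ p ∂μ := integral_nonneg fun x => Real.rpow_nonneg (hf x) p
  simp only [hpt] at h
  rw [← ofReal_integral_eq_lintegral_ofReal hfq (.of_forall fun x => Real.rpow_nonneg (hf x) _),
    ← ofReal_integral_eq_lintegral_ofReal hf1 (.of_forall hf),
    ← ofReal_integral_eq_lintegral_ofReal hfp (.of_forall fun x => Real.rpow_nonneg (hf x) _),
    ENNReal.ofReal_rpow_of_nonneg hI1 hs.le, ENNReal.ofReal_rpow_of_nonneg hIp hs1',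
    ← ENNReal.ofReal_mul (Real.rpow_nonneg hI1 _)] at h
  exact (ENNReal.ofReal_le_ofReal_iff
    (mul_nonneg (Real.rpow_nonneg hI1 _) (Real.rpow_nonneg hIp _))).1 h

lemma exists_sq_integral_rpow_le {α : Type*} [MeasurableSpace α] (μ : Measure α)
    [IsProbabilityMeasure μ] {r : ℝ} (hr : 0 < r) :
    ∃ θ : ℝ, 0 < θ ∧ θ ≤ 1 ∧ ∀ f : α → ℝ, 0 ≤ f → Integrable f μ →
      Integrable (fun x => f x ^ r) μ → Integrable (fun x => f x ^ (2 * r)) μ →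
      (∫ x, f x ^ r ∂μ) ^ 2 ≤
        ((∫ x, f x ∂μ) ^ (2 * r)) ^ θ * (∫ x, f x ^ (2 * r) ∂μ) ^ (1 - θ) := by
  rcases le_or_gt r 1 with hr1 | hr1
  · refine ⟨1, one_pos, le_rfl, fun f hf hf1 hfr _ => ?_⟩
    have h := integral_rpow_interp_le (μ := μ) hf hr hr1 le_rfl hf1 (by simp) (by simpa using hfr)
    simp only [mul_zero, add_zero, Real.rpow_zero, integral_const, probReal_univ, smul_eq_mul,
      mul_one, Real.one_rpow] at h
    rw [Real.rpow_one, sub_self, Real.rpow_zero, mul_one, mul_comm 2 r,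
      Real.rpow_mul (integral_nonneg hf), Real.rpow_two]
    exact pow_le_pow_left₀ (integral_nonneg fun x => Real.rpow_nonneg (hf x) r) h 2
  · have h2r : 0 < 2 * r - 1 := by linarith
    refine ⟨(2 * r - 1)⁻¹, by positivity, inv_le_one_of_one_le₀ (by linarith),
      fun f hf hf1 hfr hf2r => ?_⟩
    set s := r / (2 * r - 1)
    have hinv : (2 * r - 1)⁻¹ * (2 * r - 1) = 1 := inv_mul_cancel₀ h2r.ne'
    have hs : s = r * (2 * r - 1)⁻¹ := div_eq_mul_inv r _
    have hrs : s + (1 - s) * (2 * r) = r := by rw [hs]; linear_combination -r * hinv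
    have h := integral_rpow_interp_le (μ := μ) hf (s := s) (p := 2 * r) (by positivity)
      ((div_le_one h2r).2 (by linarith)) (by positivity) hf1 hf2r (by rwa [hrs])
    rw [hrs] at h
    calc (∫ x, f x ^ r ∂μ) ^ 2 ≤ ((∫ x, f x ∂μ) ^ s * (∫ x, f x ^ (2 * r) ∂μ) ^ (1 - s)) ^ 2 :=
          pow_le_pow_left₀ (integral_nonneg fun x => Real.rpow_nonneg (hf x) r) h 2
      _ = _ := by
        have hI1 : 0 ≤ ∫ x, f x ∂μ := integral_nonneg hf
        have hI2 : 0 ≤ ∫ x, f x ^ (2 * r) ∂μ := integral_nonneg fun x => Real.rpow_nonneg (hf x) _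
        rw [mul_pow, ← Real.rpow_mul_natCast hI1, ← Real.rpow_mul_natCast hI2,
          ← Real.rpow_mul hI1]
        congr 2
        · rw [hs]; ring
        · rw [hs]; linear_combination -hinv

lemma exists_le_mul_add_of_le_mul_rpow_mul_rpow_add {K θ : ℝ} (hK : 0 < K) (hθ0 : 0 < θ)
    (hθ1 : θ ≤ 1) : ∃ C > 0, ∀ X M D : ℝ, 0 ≤ X → 0 ≤ M → 0 ≤ D →
      X ≤ K * (M ^ θ * X ^ (1 - θ) + D) → X ≤ C * (M + D) := by
  set c := (2 * K) ^ ((1 - θ) / θ)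
  have hc : 0 < c := by positivity
  refine ⟨2 * K * (c + 1), by positivity, fun X M D hX hM hD h => ?_⟩
  have hunit : c ^ θ / (2 * K) ^ (1 - θ) = 1 := by
    rw [← Real.rpow_mul (by positivity), div_mul_cancel₀ _ hθ0.ne', div_self (by positivity)]
  have hyoung : M ^ θ * X ^ (1 - θ) ≤ c * M + X / (2 * K) :=
    calc M ^ θ * X ^ (1 - θ) = M ^ θ * X ^ (1 - θ) * (c ^ θ / (2 * K) ^ (1 - θ)) := by
          rw [hunit, mul_one]
      _ = (c * M) ^ θ * (X / (2 * K)) ^ (1 - θ) := by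
          rw [Real.mul_rpow hc.le hM, Real.div_rpow hX (by positivity)]; ring
      _ ≤ θ * (c * M) + (1 - θ) * (X / (2 * K)) :=
          Real.geom_mean_le_arith_mean2_weighted hθ0.le (by linarith) (by positivity)
            (by positivity) (by ring)
      _ ≤ c * M + X / (2 * K) := by
          nlinarith [mul_nonneg hc.le hM, div_nonneg hX (by positivity : (0 : ℝ) ≤ 2 * K)]
  have hKX : K * (X / (2 * K)) = X / 2 := by field_simp
  nlinarith [mul_le_mul_of_nonneg_left hyoung hK.le, mul_nonneg hK.le hc.le,
    mul_nonneg (mul_nonneg hK.le hc.le) hM, mul_nonneg hK.le hD]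

lemma abs_abs_rpow_sub_one_mul_self {r : ℝ} (hr : 0 < r) (t : ℝ) :
    |(|t| ^ (r - 1) * t)| = |t| ^ r := by
  rcases eq_or_ne t 0 with rfl | ht
  · simp [Real.zero_rpow hr.ne']
  · rw [abs_mul, abs_of_nonneg (Real.rpow_nonneg (abs_nonneg t) _),
      ← Real.rpow_add_one (abs_ne_zero.2 ht), sub_add_cancel]

lemma abs_rpow_sub_one_mul_self_sq {r : ℝ} (hr : 0 < r) (t : ℝ) :
    (|t| ^ (r - 1) * t) ^ 2 = |t| ^ (2 * r) := by
  rw [← sq_abs, abs_abs_rpow_sub_one_mul_self hr, ← Real.rpow_mul_natCast (abs_nonneg t),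
    mul_comm]
  norm_num

lemma Continuous.abs_of_abs_rpow_sub_one_mul_self {X : Type*} [TopologicalSpace X] {u : X → ℝ}
    {r : ℝ} (hr : 0 < r) (hu : Continuous fun x => |u x| ^ (r - 1) * u x) :
    Continuous fun x => |u x| := by
  have h (x : X) : |u x| = |(|u x| ^ (r - 1) * u x)| ^ r⁻¹ := by
    rw [abs_abs_rpow_sub_one_mul_self hr, ← Real.rpow_mul (abs_nonneg _), mul_inv_cancel₀ hr.ne',
      Real.rpow_one]
  rw [show (fun x => |u x|) = fun x => |(|u x| ^ (r - 1) * u x)| ^ r⁻¹ from funext h]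
  exact hu.abs.rpow_const fun _ => Or.inr (inv_nonneg.2 hr.le)

end PoincareTorus

open PoincareTorus

theorem poincare_signed_power_general (r : ℝ) (hr : 1/2 ≤ r) (d : ℕ) :
    ∃ C : ℝ, 0 < C ∧
      ∀ u : EuclideanSpace ℝ (Fin d) → ℝ,
        Measurable u →
        (∀ x : EuclideanSpace ℝ (Fin d), ∀ i : Fin d,
          u (x + EuclideanSpace.single i (1 : ℝ)) = u x) →
        Differentiable ℝ (fun x => |u x| ^ (r - 1) * u x) →
        IntegrableOn (fun x => |u x| ^ (2 * r))
          (WithLp.ofLp ⁻¹' Set.univ.pi fun _ : Fin d => Set.Icc (0 : ℝ) 1) →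
        IntegrableOn (fun x => ‖fderiv ℝ (fun y => |u y| ^ (r - 1) * u y) x‖ ^ 2)
          (WithLp.ofLp ⁻¹' Set.univ.pi fun _ : Fin d => Set.Icc (0 : ℝ) 1) →
        (∫ x in Set.univ.pi fun _ : Fin d => Set.Icc (0 : ℝ) 1, |u (WithLp.toLp 2 x)| ^ (2 * r))
          ≤ C * ((∫ x in Set.univ.pi fun _ : Fin d => Set.Icc (0 : ℝ) 1, |u (WithLp.toLp 2 x)|) ^ (2 * r)
              + ∫ x in Set.univ.pi fun _ : Fin d => Set.Icc (0 : ℝ) 1,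
                  ‖fderiv ℝ (fun y => |u y| ^ (r - 1) * u y) (WithLp.toLp 2 x)‖ ^ 2) := by
  have hr0 : 0 < r := by linarith
  obtain ⟨θ, hθ0, hθ1, hinterp⟩ := exists_sq_integral_rpow_le (volume.restrict (cube d)) hr0
  obtain ⟨C, hC, habsorb⟩ :=
    exists_le_mul_add_of_le_mul_rpow_mul_rpow_add (K := d + 1) (by positivity) hθ0 hθ1
  refine ⟨C, hC, fun u _ _ hv _ hDv => ?_⟩
  have hu : Continuous fun x : Fin d → ℝ => |u (WithLp.toLp 2 x)| :=
    (hv.continuous.abs_of_abs_rpow_sub_one_mul_self hr0).comp (PiLp.continuous_toLp 2 _)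
  have hint (p : ℝ) (hp : 0 ≤ p) :
      Integrable (fun x => |u (WithLp.toLp 2 x)| ^ p) (volume.restrict (cube d)) :=
    (hu.rpow_const fun _ => Or.inr hp).continuousOn.integrableOn_compact (isCompact_cube d)
  refine habsorb _ _ _ (integral_nonneg fun _ => by positivity) (by positivity)
    (integral_nonneg fun _ => by positivity) ?_
  calc _ = ∫ x in cube d, (|u (WithLp.toLp 2 x)| ^ (r - 1) * u (WithLp.toLp 2 x)) ^ 2 := by
        simp only [abs_rpow_sub_one_mul_self_sq hr0]
    _ ≤ _ := integral_sq_le_of_differentiable hv hDv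
    _ = (d + 1) * ((∫ x in cube d, |u (WithLp.toLp 2 x)| ^ r) ^ 2 + ∫ x in cube d,
          ‖fderiv ℝ (fun y => |u y| ^ (r - 1) * u y) (WithLp.toLp 2 x)‖ ^ 2) := by
        simp only [abs_abs_rpow_sub_one_mul_self hr0]
    _ ≤ _ := by
        gcongr
        exact hinterp _ (fun _ => abs_nonneg _) (by simpa using hint 1 zero_le_one)
          (hint r hr0.le) (hint _ (by positivity))

/-- Poincaré inequality on the torus `𝕋^d` (realized as `ℤ^d`-periodic functions on `ℝ^d`,
integrated over the unit cube): for `r ≥ 1/2` there is `C = C(r,d) > 0` such that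
`∫ |u|^{2r} ≤ C [ (∫ |u|)^{2r} + ∫ |∇(u^r)|² ]`, where `u^r = |u|^{r−1}u`. -/
theorem poincare_signed_power (r : ℝ) (hr : 1/2 ≤ r) (d : ℕ) (hd : 1 ≤ d) :
    ∃ C : ℝ, 0 < C ∧
      ∀ u : EuclideanSpace ℝ (Fin d) → ℝ,
        Measurable u →
        (∀ x : EuclideanSpace ℝ (Fin d), ∀ i : Fin d,
          u (x + EuclideanSpace.single i (1 : ℝ)) = u x) →
        Differentiable ℝ (fun x => |u x| ^ (r - 1) * u x) →
        IntegrableOn (fun x => |u x| ^ (2 * r))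
          (WithLp.ofLp ⁻¹' Set.univ.pi fun _ : Fin d => Set.Icc (0 : ℝ) 1) →
        IntegrableOn (fun x => ‖fderiv ℝ (fun y => |u y| ^ (r - 1) * u y) x‖ ^ 2)
          (WithLp.ofLp ⁻¹' Set.univ.pi fun _ : Fin d => Set.Icc (0 : ℝ) 1) →
        (∫ x in Set.univ.pi fun _ : Fin d => Set.Icc (0 : ℝ) 1, |u (WithLp.toLp 2 x)| ^ (2 * r))
          ≤ C * ((∫ x in Set.univ.pi fun _ : Fin d => Set.Icc (0 : ℝ) 1, |u (WithLp.toLp 2 x)|) ^ (2 * r)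
              + ∫ x in Set.univ.pi fun _ : Fin d => Set.Icc (0 : ℝ) 1,
                  ‖fderiv ℝ (fun y => |u y| ^ (r - 1) * u y) (WithLp.toLp 2 x)‖ ^ 2) :=
  poincare_signed_power_general r hr d
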